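/- arXiv:1601.03337 — 2 statements merged into one kernel-verified Lean document; each statement's English description precedes it below -/
import Mathlib

section
/- For σ > 1/2 there exists C_σ > 0 such that for all v ∈ H^σ(T) and f ∈ L²(T), the commutator satisfies ‖[H; v]f‖_{L²(T)} ≤ C_σ ‖v‖_{H^σ(T)} ‖f‖_{L²(T)}, where [H;v]f := H[vf] - v·H[f]. -/
open scoped Real

noncomputable section

/-- The Japanese-bracket power `⟨k⟩ˢ = (1 + |k|²)^{s/2}`. -/
def japow (k : ℤ) (s : ℝ) : ℝ := (1 + (k : ℝ) ^ 2) ^ (s / 2)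

/-- The squared `Hˢ(𝕋)` norm of a periodic function described by its sequence of
Fourier coefficients `c`: `‖f‖²_{Hˢ} = 2π·Σ_k ⟨k⟩^{2s}|f^(k)|²`. -/
def hsNormSq (s : ℝ) (c : ℤ → ℂ) : ℝ := 2 * Real.pi * ∑' k : ℤ, japow k (2 * s) * ‖c k‖ ^ 2

/-- The `Hˢ(𝕋)` norm in terms of Fourier coefficients. -/
def hsNorm (s : ℝ) (c : ℤ → ℂ) : ℝ := Real.sqrt (hsNormSq s c)

/-- Membership in the Sobolev space `Hˢ(𝕋)`, in terms of Fourier coefficients. -/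
def MemHs (s : ℝ) (c : ℤ → ℂ) : Prop := Summable fun k : ℤ => japow k (2 * s) * ‖c k‖ ^ 2

/-- The discrete Hilbert transform on the Fourier side: `(H[f])^(k) = -i·sgn(k)·f^(k)`. -/
def hilbC (c : ℤ → ℂ) : ℤ → ℂ := fun k => -Complex.I * (Int.sign k : ℤ) * c k

/-- The `x`-derivative on the Fourier side: `(∂ₓf)^(k) = i·k·f^(k)`. -/
def derC (c : ℤ → ℂ) : ℤ → ℂ := fun k => Complex.I * (k : ℂ) * c k

/-- The pointwise product of two periodic functions on the Fourier side
(discrete convolution of the coefficients). -/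
def convC (a b : ℤ → ℂ) : ℤ → ℂ := fun k => ∑' ℓ : ℤ, a (k - ℓ) * b ℓ

/-- The commutator `[H; v]f = H[v·f] - v·H[f]` on the Fourier side. -/
def commH (v f : ℤ → ℂ) : ℤ → ℂ := fun k => hilbC (convC v f) k - convC v (hilbC f) k

/-!
The Fourier symbol of `[H; v]` at `(k, ℓ)` is `-i (sgn k - sgn ℓ)`, of modulus at most `2`, so
`|([H; v]f)^(k)| ≤ 2 (|v̂| ∗ |f̂|)(k)`. Young's inequality `ℓ¹ ∗ ℓ² ⊆ ℓ²` then bounds the `L²` norm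
of the commutator by `2 ‖v̂‖_{ℓ¹} ‖f‖_{L²}`, and by Cauchy–Schwarz
`‖v̂‖_{ℓ¹}² ≤ (∑ ⟨k⟩^{-2σ}) ‖v‖²_{H^σ} / (2π)`, where the sum converges because `2σ > 1`.
-/

open scoped ENNReal

theorem ENNReal.two_mul_le_add_sq (p q : ℝ≥0∞) : 2 * p * q ≤ p ^ 2 + q ^ 2 := by
  rcases eq_or_ne p ⊤ with rfl | hp
  · simp
  rcases eq_or_ne q ⊤ with rfl | hq
  · simp
  lift p to NNReal using hp
  lift q to NNReal using hq
  exact_mod_cast _root_.two_mul_le_add_sq p q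

theorem ENNReal.tsum_mul_sq_le {ι : Type*} (a b : ι → ℝ≥0∞) :
    (∑' i, a i * b i) ^ 2 ≤ (∑' i, a i) * ∑' i, a i * b i ^ 2 := by
  have expand (c d : ι → ℝ≥0∞) : (∑' i, c i) * ∑' j, d j = ∑' i, ∑' j, c i * d j := by
    rw [← ENNReal.tsum_mul_right]
    exact tsum_congr fun i => ENNReal.tsum_mul_left.symm
  rw [← ENNReal.mul_le_mul_iff_right two_ne_zero ENNReal.ofNat_ne_top]
  calc 2 * (∑' i, a i * b i) ^ 2
      = ∑' i, ∑' j, a i * a j * (2 * b i * b j) := by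
        rw [sq, expand, ← ENNReal.tsum_mul_left]
        refine tsum_congr fun i => ?_
        rw [← ENNReal.tsum_mul_left]
        exact tsum_congr fun j => by ring
    _ ≤ ∑' i, ∑' j, a i * a j * (b i ^ 2 + b j ^ 2) := by
        gcongr with i j
        exact ENNReal.two_mul_le_add_sq _ _
    _ = (∑' i, ∑' j, a j * (a i * b i ^ 2)) + ∑' i, ∑' j, a i * (a j * b j ^ 2) := by
        rw [← ENNReal.tsum_add]
        refine tsum_congr fun i => ?_
        rw [← ENNReal.tsum_add]
        exact tsum_congr fun j => by ring
    _ = 2 * ((∑' i, a i) * ∑' i, a i * b i ^ 2) := by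
        rw [ENNReal.tsum_comm, ← expand, two_mul]

theorem ENNReal.tsum_conv_sq_le {G : Type*} [AddGroup G] (a b : G → ℝ≥0∞) :
    ∑' k, (∑' l, a (k - l) * b l) ^ 2 ≤ (∑' k, a k) ^ 2 * ∑' k, b k ^ 2 := by
  have shift_left (k : G) : ∑' l, a (k - l) = ∑' l, a l := (Equiv.subLeft k).tsum_eq a
  have shift_right (l : G) : ∑' k, a (k - l) = ∑' k, a k := (Equiv.subRight l).tsum_eq a
  calc ∑' k, (∑' l, a (k - l) * b l) ^ 2
      ≤ ∑' k, (∑' l, a (k - l)) * ∑' l, a (k - l) * b l ^ 2 :=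
        ENNReal.tsum_le_tsum fun k => ENNReal.tsum_mul_sq_le _ _
    _ = (∑' k, a k) * ∑' l, (∑' k, a (k - l)) * b l ^ 2 := by
        simp_rw [shift_left, ENNReal.tsum_mul_left]
        rw [ENNReal.tsum_comm]
        simp_rw [ENNReal.tsum_mul_right]
    _ = (∑' k, a k) ^ 2 * ∑' k, b k ^ 2 := by
        simp_rw [shift_right, ENNReal.tsum_mul_left]
        ring

theorem japow_nonneg (k : ℤ) (s : ℝ) : 0 ≤ japow k s := by
  unfold japow
  positivity

@[simp] theorem japow_zero (k : ℤ) : japow k 0 = 1 := by simp [japow]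

theorem japow_neg_mul_japow (k : ℤ) (s : ℝ) : japow k (-s) * japow k s = 1 := by
  rw [japow, japow, ← Real.rpow_add (by positivity), neg_div, neg_add_cancel, Real.rpow_zero]

theorem japow_neg_le_abs_rpow_neg {k : ℤ} (hk : k ≠ 0) {s : ℝ} (hs : 0 ≤ s) :
    japow k (-s) ≤ |(k : ℝ)| ^ (-s) := by
  calc japow k (-s) ≤ ((k : ℝ) ^ 2) ^ (-s / 2) :=
        Real.rpow_le_rpow_of_nonpos (by positivity) (by linarith) (by linarith)
    _ = |(k : ℝ)| ^ (-s) := by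
        rw [← sq_abs, ← Real.rpow_natCast, ← Real.rpow_mul (abs_nonneg _)]
        ring_nf

theorem summable_japow_neg {s : ℝ} (hs : 1 < s) : Summable fun k : ℤ => japow k (-s) := by
  refine (Real.summable_abs_int_rpow hs).of_norm_bounded_eventually ?_
  filter_upwards [(Set.finite_singleton (0 : ℤ)).compl_mem_cofinite] with k hk
  rw [Real.norm_of_nonneg (japow_nonneg k _)]
  exact japow_neg_le_abs_rpow_neg hk (by linarith)

theorem hsNormSq_nonneg (s : ℝ) (c : ℤ → ℂ) : 0 ≤ hsNormSq s c :=
  mul_nonneg (by positivity) (tsum_nonneg fun k => mul_nonneg (japow_nonneg _ _) (sq_nonneg _))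

/-- `hsNormSq s c / (2π)`, valued in `ℝ≥0∞` so that the estimates below need no summability
side conditions. -/
def hsENormSq (s : ℝ) (c : ℤ → ℂ) : ℝ≥0∞ :=
  ∑' k, ENNReal.ofReal (japow k (2 * s)) * ‖c k‖ₑ ^ 2

theorem hsENormSq_zero (c : ℤ → ℂ) : hsENormSq 0 c = ∑' k, ‖c k‖ₑ ^ 2 := by
  simp [hsENormSq]

theorem MemHs.ofReal_hsNormSq {s : ℝ} {c : ℤ → ℂ} (h : MemHs s c) :
    ENNReal.ofReal (hsNormSq s c) = ENNReal.ofReal (2 * π) * hsENormSq s c := by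
  rw [hsNormSq, ENNReal.ofReal_mul (by positivity), hsENormSq,
    ENNReal.ofReal_tsum_of_nonneg (fun k => mul_nonneg (japow_nonneg _ _) (sq_nonneg _)) h]
  congr 1
  refine tsum_congr fun k => ?_
  rw [ENNReal.ofReal_mul (japow_nonneg _ _), ENNReal.ofReal_pow (norm_nonneg _), ofReal_norm]

theorem ofReal_hsNormSq_le (s : ℝ) (c : ℤ → ℂ) :
    ENNReal.ofReal (hsNormSq s c) ≤ ENNReal.ofReal (2 * π) * hsENormSq s c := by
  by_cases h : MemHs s c
  · exact h.ofReal_hsNormSq.le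
  · simp [hsNormSq, tsum_eq_zero_of_not_summable h]

theorem tsum_enorm_sq_le (s : ℝ) (c : ℤ → ℂ) :
    (∑' k, ‖c k‖ₑ) ^ 2 ≤ (∑' k, ENNReal.ofReal (japow k (-(2 * s)))) * hsENormSq s c := by
  have weight (k : ℤ) :
      ENNReal.ofReal (japow k (-(2 * s))) * ENNReal.ofReal (japow k (2 * s)) = 1 := by
    rw [← ENNReal.ofReal_mul (japow_nonneg _ _), japow_neg_mul_japow, ENNReal.ofReal_one]
  convert ENNReal.tsum_mul_sq_le (fun k => ENNReal.ofReal (japow k (-(2 * s))))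
    (fun k => ENNReal.ofReal (japow k (2 * s)) * ‖c k‖ₑ) using 2
  · exact tsum_congr fun k => by rw [← mul_assoc, weight, one_mul]
  · refine tsum_congr fun k => ?_
    rw [mul_pow, sq (ENNReal.ofReal _), ← mul_assoc, ← mul_assoc, weight, one_mul]

theorem norm_intCast_sign_le (k : ℤ) : ‖(k.sign : ℂ)‖ ≤ 1 := by
  rw [Complex.norm_intCast]
  rcases Int.sign_trichotomy k with h | h | h <;> norm_num [h]

theorem norm_I_mul_sign_sub_sign_le (k l : ℤ) :
    ‖-Complex.I * ((k.sign : ℂ) - l.sign)‖ ≤ 2 := by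
  rw [norm_mul, norm_neg, Complex.norm_I, one_mul]
  linarith [norm_sub_le (k.sign : ℂ) l.sign, norm_intCast_sign_le k, norm_intCast_sign_le l]

theorem commH_eq_tsum {v f : ℤ → ℂ} {k : ℤ} (h : Summable fun l => ‖v (k - l) * f l‖) :
    commH v f k = ∑' l, -Complex.I * ((k.sign : ℂ) - l.sign) * (v (k - l) * f l) := by
  have hvHf : Summable fun l => v (k - l) * hilbC f l := by
    refine h.of_norm_bounded fun l => ?_
    rw [hilbC, norm_mul, norm_mul, norm_mul, norm_mul, norm_neg, Complex.norm_I, one_mul,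
      mul_left_comm]
    exact mul_le_of_le_one_left (by positivity) (norm_intCast_sign_le l)
  rw [commH, hilbC, convC, convC, ← tsum_mul_left, ← (h.of_norm.mul_left _).tsum_sub hvHf]
  exact tsum_congr fun l => by simp only [hilbC]; ring

theorem enorm_commH_le (v f : ℤ → ℂ) (k : ℤ) :
    ‖commH v f k‖ₑ ≤ 2 * ∑' l, ‖v (k - l)‖ₑ * ‖f l‖ₑ := by
  by_cases hfin : ∑' l, ‖v (k - l)‖ₑ * ‖f l‖ₑ = ⊤
  · simp [hfin]
  have h : Summable fun l => ‖v (k - l) * f l‖ :=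
    tsum_enorm_ne_top_iff_summable_norm.1 (by simpa only [enorm_mul] using hfin)
  rw [commH_eq_tsum h, ← ENNReal.tsum_mul_left]
  refine enorm_tsum_le_tsum_enorm.trans (ENNReal.tsum_le_tsum fun l => ?_)
  rw [enorm_mul _ (v (k - l) * f l), enorm_mul (v (k - l))]
  gcongr
  rw [← ofReal_norm, ← ENNReal.ofReal_ofNat]
  exact ENNReal.ofReal_le_ofReal (norm_I_mul_sign_sub_sign_le k l)

theorem hsENormSq_commH_le (v f : ℤ → ℂ) :
    hsENormSq 0 (commH v f) ≤ 4 * (∑' k, ‖v k‖ₑ) ^ 2 * hsENormSq 0 f := by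
  rw [hsENormSq_zero, hsENormSq_zero]
  calc ∑' k, ‖commH v f k‖ₑ ^ 2 ≤ ∑' k, (2 * ∑' l, ‖v (k - l)‖ₑ * ‖f l‖ₑ) ^ 2 := by
        gcongr with k
        exact enorm_commH_le v f k
    _ = 4 * ∑' k, (∑' l, ‖v (k - l)‖ₑ * ‖f l‖ₑ) ^ 2 := by
        simp_rw [mul_pow, ENNReal.tsum_mul_left]
        norm_num
    _ ≤ 4 * ((∑' k, ‖v k‖ₑ) ^ 2 * ∑' k, ‖f k‖ₑ ^ 2) := by
        gcongr
        exact ENNReal.tsum_conv_sq_le _ _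
    _ = _ := by ring

theorem hsNormSq_commH_le {σ : ℝ} (hK : Summable fun k : ℤ => japow k (-(2 * σ)))
    {v f : ℤ → ℂ} (hv : MemHs σ v) (hf : MemHs 0 f) :
    hsNormSq 0 (commH v f) ≤
      2 * (∑' k, japow k (-(2 * σ))) / π * hsNormSq σ v * hsNormSq 0 f := by
  set K := ∑' k, japow k (-(2 * σ))
  have hK0 : 0 ≤ K := tsum_nonneg fun k => japow_nonneg _ _
  have constant : ENNReal.ofReal (2 * π) * 4 * ENNReal.ofReal K =
      ENNReal.ofReal (2 * K / π) * ENNReal.ofReal (2 * π) * ENNReal.ofReal (2 * π) := by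
    rw [← ENNReal.ofReal_ofNat 4, ← ENNReal.ofReal_mul (by positivity),
      ← ENNReal.ofReal_mul (by positivity), ← ENNReal.ofReal_mul (by positivity),
      ← ENNReal.ofReal_mul (by positivity)]
    congr 1
    field_simp
    ring
  rw [← ENNReal.ofReal_le_ofReal_iff
    (mul_nonneg (mul_nonneg (by positivity) (hsNormSq_nonneg _ _)) (hsNormSq_nonneg _ _))]
  calc ENNReal.ofReal (hsNormSq 0 (commH v f))
      ≤ ENNReal.ofReal (2 * π) * hsENormSq 0 (commH v f) := ofReal_hsNormSq_le _ _
    _ ≤ ENNReal.ofReal (2 * π) * (4 * (∑' k, ‖v k‖ₑ) ^ 2 * hsENormSq 0 f) := by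
        gcongr
        exact hsENormSq_commH_le v f
    _ ≤ ENNReal.ofReal (2 * π) * (4 * (ENNReal.ofReal K * hsENormSq σ v) * hsENormSq 0 f) := by
        gcongr
        rw [ENNReal.ofReal_tsum_of_nonneg (fun k => japow_nonneg _ _) hK]
        exact tsum_enorm_sq_le σ v
    _ = ENNReal.ofReal (2 * π) * 4 * ENNReal.ofReal K * hsENormSq σ v * hsENormSq 0 f := by
        ring
    _ = ENNReal.ofReal (2 * K / π * hsNormSq σ v * hsNormSq 0 f) := by
        rw [constant, ENNReal.ofReal_mul (mul_nonneg (by positivity) (hsNormSq_nonneg _ _)),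
          ENNReal.ofReal_mul (p := 2 * K / π) (by positivity), hv.ofReal_hsNormSq,
          hf.ofReal_hsNormSq]
        ring

/-- For `σ > 1/2` there is `C > 0` such that for all `v ∈ H^σ` and
`f ∈ L²`, `‖[H; v]f‖_{L²} ≤ C * ‖v‖_{H^σ} * ‖f‖_{L²}`, where `[H;v]f = H[vf] - v·H[f]`. -/
theorem stmt_8 (σ : ℝ) (hσ : 1 / 2 < σ) :
    ∃ C > (0 : ℝ), ∀ v f : ℤ → ℂ, MemHs σ v → MemHs 0 f →
      hsNorm 0 (commH v f) ≤ C * hsNorm σ v * hsNorm 0 f := by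
  have hK : Summable fun k : ℤ => japow k (-(2 * σ)) := summable_japow_neg (by linarith)
  have hK_pos : 0 < ∑' k, japow k (-(2 * σ)) :=
    hK.tsum_pos (fun k => japow_nonneg _ _) 0 (by simp [japow])
  refine ⟨√(2 * (∑' k, japow k (-(2 * σ))) / π), by positivity, fun v f hv hf => ?_⟩
  calc hsNorm 0 (commH v f)
      ≤ √(2 * (∑' k, japow k (-(2 * σ))) / π * hsNormSq σ v * hsNormSq 0 f) :=
        Real.sqrt_le_sqrt (hsNormSq_commH_le hK hv hf)
    _ = _ := by
        rw [Real.sqrt_mul (mul_nonneg (by positivity) (hsNormSq_nonneg _ _)),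
          Real.sqrt_mul (by positivity)]
        rfl
end
end

section
/- Let Ω be an open bounded subset of R^n, and let {u_m}, {v_m} be sequences in L²(Ω) with u, v ∈ L²(Ω) and constants δ, C > 0 such that: (a) v_m → v a.e. in Ω; (b) δ ≤ v_m ≤ C a.e. in Ω for all m; (c) u_m ⇀ u weakly in L²(Ω); (d) ∫_Ω v_m u_m² dx → ∫_Ω v u² dx. Then u_m → u strongly in L²(Ω). -/
/-!
Expanding the square, `∫ vₘ (uₘ - u)² = ∫ vₘ uₘ² - 2 ∫ uₘ (vₘ u) + ∫ vₘ u²`. Dominated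
convergence gives `∫ vₘ u² → ∫ v u²` and `vₘ u → v u` strongly in `L²`. Since `vₘ ≥ δ`, the
convergent energies bound `‖uₘ‖₂`, so pairing the weakly convergent `uₘ` with the strongly
convergent `vₘ u` gives `∫ uₘ (vₘ u) → ∫ v u²`. Hence `∫ vₘ (uₘ - u)² → 0`, and `vₘ ≥ δ` once more
gives `∫ (uₘ - u)² → 0`.
-/

open MeasureTheory Filter
open scoped ENNReal

section WeightedL2

variable {α : Type*} [MeasurableSpace α] {μ : Measure α}

lemma memLp_top_of_ae_bounds {v : α → ℝ} {a b : ℝ} (hv : AEStronglyMeasurable v μ)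
    (hab : ∀ᵐ x ∂μ, a ≤ v x ∧ v x ≤ b) : MemLp v ∞ μ :=
  memLp_top_of_bound hv (max |a| |b|) <| hab.mono fun _ hx => abs_le_max_abs_abs hx.1 hx.2

lemma integrable_mul_sq {v f : α → ℝ} (hv : MemLp v ∞ μ) (hf : MemLp f 2 μ) :
    Integrable (fun x => v x * f x ^ 2) μ := by
  have h : Integrable (fun x => v x * f x * f x) μ := (hf.mul' hv (r := 2)).integrable_mul hf
  simpa only [sq, mul_assoc] using h

lemma integral_mul_sub_sq {v f g : α → ℝ} (hv : MemLp v ∞ μ) (hf : MemLp f 2 μ)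
    (hg : MemLp g 2 μ) :
    ∫ x, v x * (f x - g x) ^ 2 ∂μ =
      ∫ x, v x * f x ^ 2 ∂μ - 2 * ∫ x, f x * (v x * g x) ∂μ + ∫ x, v x * g x ^ 2 ∂μ := by
  have hfvg : Integrable (fun x => f x * (v x * g x)) μ := hf.integrable_mul (hg.mul' hv (r := 2))
  calc ∫ x, v x * (f x - g x) ^ 2 ∂μ
      = ∫ x, v x * f x ^ 2 - 2 * (f x * (v x * g x)) + v x * g x ^ 2 ∂μ :=
        integral_congr_ae (Eventually.of_forall fun x => by ring)
    _ = _ := by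
      have hfirst : Integrable (fun x => v x * f x ^ 2 - 2 * (f x * (v x * g x))) μ :=
        (integrable_mul_sq hv hf).sub (hfvg.const_mul 2)
      rw [integral_add hfirst (integrable_mul_sq hv hg),
        integral_sub (integrable_mul_sq hv hf) (hfvg.const_mul 2), integral_const_mul]

lemma mul_integral_sq_le_integral_mul_sq {v f : α → ℝ} {δ : ℝ} (hv : MemLp v ∞ μ)
    (hδv : ∀ᵐ x ∂μ, δ ≤ v x) (hf : MemLp f 2 μ) :
    δ * ∫ x, f x ^ 2 ∂μ ≤ ∫ x, v x * f x ^ 2 ∂μ := by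
  rw [← integral_const_mul]
  refine integral_mono_ae (hf.integrable_sq.const_mul δ) (integrable_mul_sq hv hf) ?_
  filter_upwards [hδv] with x hx
  exact mul_le_mul_of_nonneg_right hx (sq_nonneg _)

lemma abs_integral_mul_le_sqrt_mul_sqrt {f g : α → ℝ} (hf : MemLp f 2 μ) (hg : MemLp g 2 μ) :
    |∫ x, f x * g x ∂μ| ≤ √(∫ x, f x ^ 2 ∂μ) * √(∫ x, g x ^ 2 ∂μ) := by
  have hnorm_sq (h : α → ℝ) : ∫ x, ‖h x‖ ^ (2 : ℝ) ∂μ = ∫ x, h x ^ 2 ∂μ := by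
    simp only [Real.rpow_two, Real.norm_eq_abs, sq_abs]
  have holder := integral_mul_norm_le_Lp_mul_Lq (f := f) (g := g) Real.HolderConjugate.two_two
    (by rwa [ENNReal.ofReal_ofNat]) (by rwa [ENNReal.ofReal_ofNat])
  rw [hnorm_sq f, hnorm_sq g, ← Real.sqrt_eq_rpow, ← Real.sqrt_eq_rpow] at holder
  calc |∫ x, f x * g x ∂μ| ≤ ∫ x, |f x * g x| ∂μ := abs_integral_le_integral_abs
    _ = ∫ x, ‖f x‖ * ‖g x‖ ∂μ := by simp only [abs_mul, Real.norm_eq_abs]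
    _ ≤ _ := holder

lemma tendsto_integral_mul_of_tendsto_ae {g : ℕ → α → ℝ} {G f : α → ℝ} {K : ℝ}
    (hg : ∀ m, AEStronglyMeasurable (g m) μ) (hgK : ∀ m, ∀ᵐ x ∂μ, |g m x| ≤ K)
    (hgG : ∀ᵐ x ∂μ, Tendsto (fun m => g m x) atTop (nhds (G x))) (hf : Integrable f μ) :
    Tendsto (fun m => ∫ x, g m x * f x ∂μ) atTop (nhds (∫ x, G x * f x ∂μ)) := by
  refine tendsto_integral_of_dominated_convergence (fun x => K * ‖f x‖)
    (fun m => (hg m).mul hf.1) (hf.norm.const_mul K) (fun m => ?_) ?_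
  · filter_upwards [hgK m] with x hx
    rw [norm_mul, Real.norm_eq_abs]
    exact mul_le_mul_of_nonneg_right hx (norm_nonneg _)
  · filter_upwards [hgG] with x hx
    exact hx.mul_const _

lemma tendsto_integral_sq_mul_sub_mul {v : ℕ → α → ℝ} {V f : α → ℝ} {K : ℝ}
    (hv : ∀ m, AEStronglyMeasurable (v m) μ) (hV : AEStronglyMeasurable V μ)
    (hvK : ∀ m, ∀ᵐ x ∂μ, |v m x - V x| ≤ K)
    (hvV : ∀ᵐ x ∂μ, Tendsto (fun m => v m x) atTop (nhds (V x))) (hf : MemLp f 2 μ) :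
    Tendsto (fun m => ∫ x, (v m x * f x - V x * f x) ^ 2 ∂μ) atTop (nhds 0) := by
  have h := tendsto_integral_mul_of_tendsto_ae (g := fun m x => (v m x - V x) ^ 2) (K := K ^ 2)
    (fun m => ((hv m).sub hV).pow 2) (fun m => ?_)
    (hvV.mono fun x hx => (hx.sub_const (V x)).pow 2) hf.integrable_sq
  · simp only [sub_self, zero_pow two_ne_zero, zero_mul, integral_zero] at h
    exact h.congr fun m => integral_congr_ae (Eventually.of_forall fun x => by ring)
  · filter_upwards [hvK m] with x hx
    rw [abs_of_nonneg (sq_nonneg _), ← sq_abs]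
    exact pow_le_pow_left₀ (abs_nonneg _) hx 2

lemma tendsto_integral_mul_of_weak_of_strong {u w : ℕ → α → ℝ} {U W : α → ℝ} {M : ℝ}
    (hu : ∀ m, MemLp (u m) 2 μ) (hw : ∀ m, MemLp (w m) 2 μ) (hW : MemLp W 2 μ)
    (hweak : ∀ h : α → ℝ, MemLp h 2 μ →
      Tendsto (fun m => ∫ x, u m x * h x ∂μ) atTop (nhds (∫ x, U x * h x ∂μ)))
    (hu_sq_le : ∀ m, ∫ x, u m x ^ 2 ∂μ ≤ M)
    (hstrong : Tendsto (fun m => ∫ x, (w m x - W x) ^ 2 ∂μ) atTop (nhds 0)) :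
    Tendsto (fun m => ∫ x, u m x * w m x ∂μ) atTop (nhds (∫ x, U x * W x ∂μ)) := by
  have hsplit : ∀ m, ∫ x, u m x * w m x ∂μ =
      ∫ x, u m x * (w m x - W x) ∂μ + ∫ x, u m x * W x ∂μ := fun m => by
    have hdiff_int : Integrable (fun x => u m x * (w m x - W x)) μ :=
      (hu m).integrable_mul ((hw m).sub hW)
    have hW_int : Integrable (fun x => u m x * W x) μ := (hu m).integrable_mul hW
    rw [← integral_add hdiff_int hW_int]
    exact integral_congr_ae (Eventually.of_forall fun x => by ring)
  have hsmall : Tendsto (fun m => ∫ x, u m x * (w m x - W x) ∂μ) atTop (nhds 0) := by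
    have hbound : Tendsto (fun m => √M * √(∫ x, (w m x - W x) ^ 2 ∂μ)) atTop (nhds 0) := by
      simpa using (hstrong.sqrt).const_mul √M
    refine squeeze_zero_norm (fun m => ?_) hbound
    refine (abs_integral_mul_le_sqrt_mul_sqrt (hu m) ((hw m).sub hW)).trans ?_
    exact mul_le_mul_of_nonneg_right (Real.sqrt_le_sqrt (hu_sq_le m)) (Real.sqrt_nonneg _)
  simpa only [hsplit, zero_add] using hsmall.add (hweak W hW)

theorem tendsto_integral_sq_sub_of_tendsto_weighted_energy {u v : ℕ → α → ℝ} {U V : α → ℝ}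
    {δ C : ℝ} (hδ : 0 < δ) (hu : ∀ m, MemLp (u m) 2 μ) (hv : ∀ m, AEStronglyMeasurable (v m) μ)
    (hU : MemLp U 2 μ) (hae : ∀ᵐ x ∂μ, Tendsto (fun m => v m x) atTop (nhds (V x)))
    (hbd : ∀ m, ∀ᵐ x ∂μ, δ ≤ v m x ∧ v m x ≤ C)
    (hweak : ∀ w : α → ℝ, MemLp w 2 μ →
      Tendsto (fun m => ∫ x, u m x * w x ∂μ) atTop (nhds (∫ x, U x * w x ∂μ)))
    (henergy : Tendsto (fun m => ∫ x, v m x * u m x ^ 2 ∂μ) atTop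
      (nhds (∫ x, V x * U x ^ 2 ∂μ))) :
    Tendsto (fun m => ∫ x, (u m x - U x) ^ 2 ∂μ) atTop (nhds 0) := by
  have hVbd : ∀ᵐ x ∂μ, δ ≤ V x ∧ V x ≤ C := by
    filter_upwards [hae, ae_all_iff.2 hbd] with x hlim hx
    exact ⟨ge_of_tendsto' hlim fun m => (hx m).1, le_of_tendsto' hlim fun m => (hx m).2⟩
  have hvinf m : MemLp (v m) ∞ μ := memLp_top_of_ae_bounds (hv m) (hbd m)
  have hVinf : MemLp V ∞ μ :=
    memLp_top_of_ae_bounds (aestronglyMeasurable_of_tendsto_ae atTop hv hae) hVbd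
  obtain ⟨M, hM⟩ := henergy.bddAbove_range
  have hu_sq_le m : ∫ x, u m x ^ 2 ∂μ ≤ M / δ := by
    rw [le_div_iff₀' hδ]
    exact (mul_integral_sq_le_integral_mul_sq (hvinf m) ((hbd m).mono fun _ hx => hx.1)
      (hu m)).trans (hM ⟨m, rfl⟩)
  have hUsq : Tendsto (fun m => ∫ x, v m x * U x ^ 2 ∂μ) atTop (nhds (∫ x, V x * U x ^ 2 ∂μ)) :=
    tendsto_integral_mul_of_tendsto_ae hv
      (fun m => (hbd m).mono fun _ hx => abs_le.2 ⟨by linarith [hx.1], hx.2⟩) hae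
      hU.integrable_sq
  have hvV_le m : ∀ᵐ x ∂μ, |v m x - V x| ≤ C - δ := by
    filter_upwards [hbd m, hVbd] with x hx hVx
    exact abs_le.2 ⟨by linarith, by linarith⟩
  have hstrong := tendsto_integral_sq_mul_sub_mul hv hVinf.1 hvV_le hae hU
  have hcross : Tendsto (fun m => ∫ x, u m x * (v m x * U x) ∂μ) atTop
      (nhds (∫ x, U x * (V x * U x) ∂μ)) :=
    tendsto_integral_mul_of_weak_of_strong hu (fun m => hU.mul' (hvinf m)) (hU.mul' hVinf)
      hweak hu_sq_le hstrong
  have hweighted : Tendsto (fun m => ∫ x, v m x * (u m x - U x) ^ 2 ∂μ) atTop (nhds 0) := by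
    have hUVU : ∫ x, U x * (V x * U x) ∂μ = ∫ x, V x * U x ^ 2 ∂μ :=
      integral_congr_ae (Eventually.of_forall fun x => by ring)
    have h := (henergy.sub (hcross.const_mul 2)).add hUsq
    rw [hUVU, show ∀ a : ℝ, a - 2 * a + a = 0 from fun a => by ring] at h
    exact h.congr fun m => (integral_mul_sub_sq (hvinf m) (hu m) hU).symm
  refine squeeze_zero (fun m => integral_nonneg fun x => sq_nonneg _) (fun m => ?_)
    (by simpa using hweighted.const_mul δ⁻¹)
  rw [← div_eq_inv_mul, le_div_iff₀' hδ]
  exact mul_integral_sq_le_integral_mul_sq (hvinf m) ((hbd m).mono fun _ hx => hx.1)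
    ((hu m).sub hU)

end WeightedL2

theorem stmt_18_general (n : ℕ) (Ω : Set (EuclideanSpace ℝ (Fin n)))
    (u v : ℕ → EuclideanSpace ℝ (Fin n) → ℝ) (U V : EuclideanSpace ℝ (Fin n) → ℝ)
    (δ C : ℝ) (hδ : 0 < δ)
    (hu : ∀ m, MemLp (u m) 2 (volume.restrict Ω))
    (hv : ∀ m, MemLp (v m) 2 (volume.restrict Ω))
    (hU : MemLp U 2 (volume.restrict Ω))
    (hae : ∀ᵐ x ∂(volume.restrict Ω), Tendsto (fun m => v m x) atTop (nhds (V x)))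
    (hbd : ∀ m, ∀ᵐ x ∂(volume.restrict Ω), δ ≤ v m x ∧ v m x ≤ C)
    (hweak : ∀ w : EuclideanSpace ℝ (Fin n) → ℝ, MemLp w 2 (volume.restrict Ω) →
      Tendsto (fun m => ∫ x, u m x * w x ∂(volume.restrict Ω)) atTop
        (nhds (∫ x, U x * w x ∂(volume.restrict Ω))))
    (henergy : Tendsto (fun m => ∫ x, v m x * (u m x) ^ 2 ∂(volume.restrict Ω)) atTop
      (nhds (∫ x, V x * (U x) ^ 2 ∂(volume.restrict Ω)))) :
    Tendsto (fun m => ∫ x, (u m x - U x) ^ 2 ∂(volume.restrict Ω)) atTop (nhds 0) :=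
  tendsto_integral_sq_sub_of_tendsto_weighted_energy hδ hu (fun m => (hv m).1) hU hae hbd hweak
    henergy

/-- Let `Ω ⊆ ℝⁿ` be open and bounded, `{uₘ}, {vₘ} ⊆ L²(Ω)`, `u, v ∈ L²(Ω)`,
and `δ, C > 0` with: (a) `vₘ → v` a.e. in `Ω`; (b) `δ ≤ vₘ ≤ C` a.e. in `Ω` for all `m`;
(c) `uₘ ⇀ u` weakly in `L²(Ω)`; (d) `∫ vₘ uₘ² → ∫ v u²`. Then `uₘ → u` strongly in `L²(Ω)`. -/
theorem stmt_18 (n : ℕ) (Ω : Set (EuclideanSpace ℝ (Fin n))) (hΩo : IsOpen Ω)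
    (hΩb : Bornology.IsBounded Ω)
    (u v : ℕ → EuclideanSpace ℝ (Fin n) → ℝ) (U V : EuclideanSpace ℝ (Fin n) → ℝ)
    (δ C : ℝ) (hδ : 0 < δ) (hC : 0 < C)
    (hu : ∀ m, MemLp (u m) 2 (volume.restrict Ω))
    (hv : ∀ m, MemLp (v m) 2 (volume.restrict Ω))
    (hU : MemLp U 2 (volume.restrict Ω)) (hV : MemLp V 2 (volume.restrict Ω))
    (hae : ∀ᵐ x ∂(volume.restrict Ω), Tendsto (fun m => v m x) atTop (nhds (V x)))
    (hbd : ∀ m, ∀ᵐ x ∂(volume.restrict Ω), δ ≤ v m x ∧ v m x ≤ C)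
    (hweak : ∀ w : EuclideanSpace ℝ (Fin n) → ℝ, MemLp w 2 (volume.restrict Ω) →
      Tendsto (fun m => ∫ x, u m x * w x ∂(volume.restrict Ω)) atTop
        (nhds (∫ x, U x * w x ∂(volume.restrict Ω))))
    (henergy : Tendsto (fun m => ∫ x, v m x * (u m x) ^ 2 ∂(volume.restrict Ω)) atTop
      (nhds (∫ x, V x * (U x) ^ 2 ∂(volume.restrict Ω)))) :
    Tendsto (fun m => ∫ x, (u m x - U x) ^ 2 ∂(volume.restrict Ω)) atTop (nhds 0) :=
  stmt_18_general n Ω u v U V δ C hδ hu hv hU hae hbd hweak henergy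
end
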